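/- Let d ≥ 1, let α, β ⊢ d be partitions, and let 0 ≤ s ≤ r be integers. In the group algebra ℂ[S(d)], let J_y = Σ_{x<y} (x y) be the Jucys–Murphy elements, let C_α and C_β be the sums of all permutations of cycle type α and β respectively, and let h_k denote the complete homogeneous symmetric polynomial of degree k in d variables (the J_y commute, so h_k(J_1,…,J_d) is well defined). Then the coefficient of the identity permutation in the element C_α · h_s(J_1,…,J_d) · h_{r−s}(J_1,…,J_d) · C_β equals W⃗^r(α,β;s), the number of two-legged monotone r-step walks from cycle type α to cycle type β with reset at time s. -/

import Mathlib

open scoped Classical Nat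

noncomputable section

/-! ### Monotone walks on the symmetric group and monotone Hurwitz numbers -/

/-- `σ` has cycle type `α ⊢ d`: the parts of `α` are the cycle lengths of `σ`,
including one part equal to `1` for each fixed point. -/
def HasCycleType {d : ℕ} (σ : Equiv.Perm (Fin d)) (α : d.Partition) : Prop :=
  σ.cycleType + Multiset.replicate (d - σ.cycleType.sum) 1 = α.parts

/-- The subgroup generated by `σ` and the `τ i` acts transitively on `{1,…,d}`. -/
def TransitiveTuple {d r : ℕ} (σ : Equiv.Perm (Fin d)) (τ : Fin r → Equiv.Perm (Fin d)) : Prop :=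
  ∀ x y : Fin d, ∃ g ∈ Subgroup.closure ({σ} ∪ Set.range τ), g x = y

/-- A two-legged monotone `r`-step walk from cycle type `α` to cycle type `β` with reset
at time `s`: a tuple `(σ, τ₁, …, τ_r)` where `σ` has cycle type `α`, each `τ_i` is encoded
as a pair `(x_i, y_i)` with `x_i < y_i` (the transposition `(x_i y_i)` with mark `y_i`),
the marks satisfy `y₁ ≤ … ≤ y_s` and `y_{s+1} ≤ … ≤ y_r`, and `τ_r ⋯ τ₁ σ` has cycle
type `β`. -/
def IsTwoLegWalk {d : ℕ} (r s : ℕ) (α β : d.Partition)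
    (σ : Equiv.Perm (Fin d)) (τ : Fin r → Fin d × Fin d) : Prop :=
  HasCycleType σ α ∧
  (∀ i, (τ i).1 < (τ i).2) ∧
  (∀ i j : Fin r, i ≤ j → ((j : ℕ) < s ∨ s ≤ (i : ℕ)) → (τ i).2 ≤ (τ j).2) ∧
  HasCycleType ((List.ofFn (fun i => Equiv.swap (τ i).1 (τ i).2)).reverse.prod * σ) β

/-- The two-legged monotone walk count `W⃗^r(α,β;s)`. -/
noncomputable def Wcount (d r s : ℕ) (α β : d.Partition) : ℕ :=
  Nat.card {w : Equiv.Perm (Fin d) × (Fin r → Fin d × Fin d) //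
    IsTwoLegWalk r s α β w.1 w.2}

/-- The connected (transitive) two-legged monotone walk count `H⃗^r(α,β;s)`. -/
noncomputable def Hcount (d r s : ℕ) (α β : d.Partition) : ℕ :=
  Nat.card {w : Equiv.Perm (Fin d) × (Fin r → Fin d × Fin d) //
    IsTwoLegWalk r s α β w.1 w.2 ∧
    TransitiveTuple w.1 (fun i => Equiv.swap ((w.2 i).1) ((w.2 i).2))}

/-- The connected two-legged monotone double Hurwitz number of genus `g`:
`H⃗_g(α,β;s) = H⃗^r(α,β;s)` with `r = 2g - 2 + ℓ(α) + ℓ(β)`. -/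
noncomputable def hurwitzTwoLeg {d : ℕ} (g : ℕ) (α β : d.Partition) (s : ℕ) : ℕ :=
  Hcount d (2 * g + α.parts.card + β.parts.card - 2) s α β

/-- The connected monotone double Hurwitz number `H⃗_g(α,β)` of genus `g` (a single
monotone leg; taking `s = 0` makes the whole walk monotone). -/
noncomputable def hurwitzMonotone {d : ℕ} (g : ℕ) (α β : d.Partition) : ℕ :=
  Hcount d (2 * g + α.parts.card + β.parts.card - 2) 0 α β

/-- The Jucys–Murphy element `J_y = ∑_{x<y} (x y)` in `ℂ[S(d)]`. -/
noncomputable def JM (d : ℕ) (y : Fin d) : MonoidAlgebra ℂ (Equiv.Perm (Fin d)) :=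
  ∑ x ∈ Finset.Iio y, MonoidAlgebra.single (Equiv.swap x y) 1

/-- The conjugacy class sum `C_α`: the sum of all permutations of cycle type `α`. -/
noncomputable def classSum (d : ℕ) (α : d.Partition) :
    MonoidAlgebra ℂ (Equiv.Perm (Fin d)) :=
  ∑ σ ∈ Finset.univ.filter (fun σ : Equiv.Perm (Fin d) => HasCycleType σ α),
    MonoidAlgebra.single σ 1

/-- `h_k(J₁,…,J_d)`: the complete homogeneous symmetric polynomial of degree `k`
evaluated at the (commuting) Jucys–Murphy elements, i.e.
`∑_{y₁ ≤ … ≤ y_k} J_{y₁}⋯J_{y_k}`. -/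
noncomputable def hJM (d k : ℕ) : MonoidAlgebra ℂ (Equiv.Perm (Fin d)) :=
  ∑ f ∈ Finset.univ.filter (fun f : Fin k → Fin d => Monotone f),
    (List.ofFn (fun i => JM d (f i))).prod

/-!
Expand every factor as a sum of permutations with coefficient one: `C_α` over the permutations
of cycle type `α`, and `h_k(J₁,…,J_d)` over the tuples of transpositions `(x_i y_i)`, `x_i < y_i`,
with weakly increasing marks `y_i`, each contributing the product `(x₁ y₁)⋯(x_k y_k)`. The
coefficient of the identity then counts the tuples `(π, τ, τ', ρ)` with `π P(τ) P(τ') ρ = 1`.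
Since `ρ = (P(τ) P(τ'))⁻¹ π⁻¹` is determined by the rest, concatenating `τ` and `τ'` turns these
bijectively into the two-legged walks starting at `π⁻¹` with reset at time `|τ|`.
-/

open Finset MonoidAlgebra Equiv

namespace MonoidAlgebra

variable {k G ι κ : Type*} [Semiring k]

theorem coeff_sum_single_one [DecidableEq G] (s : Finset ι) (f : ι → G) (x : G) :
    (∑ i ∈ s, single (f i) (1 : k)).coeff x = #{i ∈ s | f i = x} := by
  simp [Finsupp.single_apply, Finset.sum_boole]

variable [Monoid G]

theorem sum_single_one_mul_sum_single_one (s : Finset ι) (t : Finset κ) (f : ι → G)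
    (g : κ → G) :
    (∑ i ∈ s, single (f i) (1 : k)) * ∑ j ∈ t, single (g j) 1 =
      ∑ p ∈ s ×ˢ t, single (f p.1 * g p.2) 1 := by
  simp [Finset.sum_mul_sum, Finset.sum_product, single_mul_single]

theorem list_prod_ofFn_sum_single_one {n : ℕ} (S : Fin n → Finset ι) (f : Fin n → ι → G) :
    (List.ofFn fun i => ∑ x ∈ S i, single (f i x) (1 : k)).prod =
      ∑ x ∈ Fintype.piFinset S, single (List.ofFn fun i => f i (x i)).prod 1 := by
  induction n with
  | zero => simp [one_def]
  | succ n ih =>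
    rw [List.ofFn_succ, List.prod_cons, ih, sum_single_one_mul_sum_single_one]
    refine Finset.sum_equiv (Fin.consEquiv fun _ => ι) (fun p => ?_) (fun p _ => ?_)
    · simp [Fin.forall_fin_succ]
    · simp [List.ofFn_succ]

end MonoidAlgebra

def swapProd {d n : ℕ} (τ : Fin n → Fin d × Fin d) : Perm (Fin d) :=
  (List.ofFn fun i => swap (τ i).1 (τ i).2).prod

def IsMonotoneSwapTuple {d n : ℕ} (τ : Fin n → Fin d × Fin d) : Prop :=
  (∀ i, (τ i).1 < (τ i).2) ∧ Monotone fun i => (τ i).2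

def monotoneSwapTuples (d n : ℕ) : Finset (Fin n → Fin d × Fin d) :=
  {τ | IsMonotoneSwapTuple τ}

def permsOfCycleType (d : ℕ) (α : d.Partition) : Finset (Perm (Fin d)) :=
  {σ | HasCycleType σ α}

theorem classSum_eq_sum_single (d : ℕ) (α : d.Partition) :
    classSum d α = ∑ σ ∈ permsOfCycleType d α, single σ 1 :=
  rfl

theorem hJM_eq_sum_single (d k : ℕ) :
    hJM d k = ∑ τ ∈ monotoneSwapTuples d k, single (swapProd τ) 1 := by
  simp only [hJM, JM, monotoneSwapTuples, list_prod_ofFn_sum_single_one]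
  rw [Finset.sum_sigma']
  refine Finset.sum_nbij' (fun p i => (p.2 i, p.1 i))
    (fun τ => ⟨fun i => (τ i).2, fun i => (τ i).1⟩) ?_ ?_
    (fun _ _ => rfl) (fun _ _ => rfl) (fun _ _ => rfl)
  · intro p hp
    simp only [Finset.mem_sigma, Finset.mem_filter, Finset.mem_univ, true_and] at hp ⊢
    simp_all [IsMonotoneSwapTuple]
  · intro τ hτ
    simp only [Finset.mem_sigma, Finset.mem_filter, Finset.mem_univ, true_and] at hτ ⊢
    simp_all [IsMonotoneSwapTuple]

theorem reverse_prod_swaps {d n : ℕ} (τ : Fin n → Fin d × Fin d) :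
    (List.ofFn fun i => swap (τ i).1 (τ i).2).reverse.prod = (swapProd τ)⁻¹ := by
  simp [swapProd, List.prod_inv_reverse, List.map_ofFn, Function.comp_def, swap_inv]

theorem swapProd_append {d s t : ℕ} (τ₁ : Fin s → Fin d × Fin d)
    (τ₂ : Fin t → Fin d × Fin d) :
    swapProd (Fin.append τ₁ τ₂) = swapProd τ₁ * swapProd τ₂ := by
  simp [swapProd, List.ofFn_add]

theorem hasCycleType_inv_iff {d : ℕ} (σ : Perm (Fin d)) (α : d.Partition) :
    HasCycleType σ⁻¹ α ↔ HasCycleType σ α := by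
  simp [HasCycleType, Perm.cycleType_inv]

theorem forall_le_append_iff {γ δ : Type*} [Preorder δ] {m n : ℕ} (mark : γ → δ)
    (f : Fin m → γ) (g : Fin n → γ) :
    (∀ i j : Fin (m + n), i ≤ j → ((j : ℕ) < m ∨ m ≤ (i : ℕ)) →
        mark (Fin.append f g i) ≤ mark (Fin.append f g j)) ↔
      Monotone (mark ∘ f) ∧ Monotone (mark ∘ g) := by
  constructor
  · intro h
    refine ⟨fun i j hij => ?_, fun i j hij => ?_⟩
    · simpa using h (Fin.castAdd n i) (Fin.castAdd n j) hij (Or.inl j.isLt)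
    · simpa using h (Fin.natAdd m i) (Fin.natAdd m j)
        ((Fin.natAdd_le_natAdd_iff m).2 hij) (Or.inr (by simp))
  · rintro ⟨hf, hg⟩ i j hij hleg
    induction i using Fin.addCases with
    | left i =>
      induction j using Fin.addCases with
      | left j => simpa using hf hij
      | right j => simp at hleg; omega
    | right i =>
      induction j using Fin.addCases with
      | left j => simp [Fin.le_def] at hij; omega
      | right j => simpa using hg ((Fin.natAdd_le_natAdd_iff m).1 hij)

theorem isTwoLegWalk_append_iff {d s t : ℕ} {α β : d.Partition} (σ : Perm (Fin d))
    (τ₁ : Fin s → Fin d × Fin d) (τ₂ : Fin t → Fin d × Fin d) :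
    IsTwoLegWalk (s + t) s α β σ (Fin.append τ₁ τ₂) ↔
      HasCycleType σ α ∧ IsMonotoneSwapTuple τ₁ ∧ IsMonotoneSwapTuple τ₂ ∧
        HasCycleType ((swapProd τ₁ * swapProd τ₂)⁻¹ * σ) β := by
  rw [IsTwoLegWalk, forall_le_append_iff Prod.snd, Fin.forall_fin_add, reverse_prod_swaps,
    swapProd_append]
  simp only [Fin.append_left, Fin.append_right, IsMonotoneSwapTuple, Function.comp_def]
  tauto

theorem wcount_add_eq_card (d s t : ℕ) (α β : d.Partition) :
    Wcount d (s + t) s α β =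
      #{q ∈ ((permsOfCycleType d α ×ˢ monotoneSwapTuples d s) ×ˢ monotoneSwapTuples d t) ×ˢ
          permsOfCycleType d β |
        q.1.1.1 * swapProd q.1.1.2 * swapProd q.1.2 * q.2 = 1} := by
  have split_walks :
      {w : Perm (Fin d) × (Fin s → Fin d × Fin d) × (Fin t → Fin d × Fin d) //
        HasCycleType w.1 α ∧ IsMonotoneSwapTuple w.2.1 ∧ IsMonotoneSwapTuple w.2.2 ∧
          HasCycleType ((swapProd w.2.1 * swapProd w.2.2)⁻¹ * w.1) β} ≃
      {w : Perm (Fin d) × (Fin (s + t) → Fin d × Fin d) //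
        IsTwoLegWalk (s + t) s α β w.1 w.2} :=
    ((Equiv.refl _).prodCongr (Fin.appendEquiv s t)).subtypeEquiv
      fun w => (isTwoLegWalk_append_iff w.1 w.2.1 w.2.2).symm
  rw [Wcount, ← Nat.card_congr split_walks, Nat.card_eq_fintype_card, Fintype.card_subtype]
  -- a solution of `π P₁ P₂ ρ = 1` is the walk starting at `π⁻¹`; it ends at `ρ`
  refine Finset.card_nbij' (fun w => (((w.1⁻¹, w.2.1), w.2.2),
      (swapProd w.2.1 * swapProd w.2.2)⁻¹ * w.1)) (fun q => (q.1.1.1⁻¹, q.1.1.2, q.1.2))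
    ?_ ?_ ?_ ?_
  · intro w hw
    obtain ⟨hα, h₁, h₂, hβ⟩ := Finset.mem_filter.1 hw |>.2
    simp only [coe_filter, permsOfCycleType, monotoneSwapTuples, mem_product, mem_filter,
      mem_univ, true_and, Set.mem_ofPred_eq, hasCycleType_inv_iff]
    exact ⟨⟨⟨⟨hα, h₁⟩, h₂⟩, hβ⟩, by group⟩
  · rintro ⟨⟨⟨π, τ₁⟩, τ₂⟩, ρ⟩ hq
    simp only [coe_filter, permsOfCycleType, monotoneSwapTuples, mem_product, mem_filter,
      mem_univ, true_and, Set.mem_ofPred_eq] at hq ⊢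
    obtain ⟨⟨⟨⟨hα, h₁⟩, h₂⟩, hβ⟩, hρ⟩ := hq
    rw [eq_inv_of_mul_eq_one_right hρ] at hβ
    refine ⟨(hasCycleType_inv_iff π α).2 hα, h₁, h₂, ?_⟩
    simpa [mul_assoc] using hβ
  · intro w _
    simp
  · rintro ⟨⟨⟨π, τ₁⟩, τ₂⟩, ρ⟩ hq
    simp only [coe_filter, Set.mem_ofPred_eq] at hq
    simp [eq_inv_of_mul_eq_one_right hq.2, mul_assoc]

theorem coeff_one_classSum_hJM_general (d : ℕ) (α β : d.Partition)
    (r s : ℕ) (hs : s ≤ r) :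
    (classSum d α * hJM d s * hJM d (r - s) * classSum d β).coeff (1 : Equiv.Perm (Fin d))
      = (Wcount d r s α β : ℂ) := by
  obtain ⟨t, rfl⟩ := Nat.exists_eq_add_of_le hs
  rw [Nat.add_sub_cancel_left, classSum_eq_sum_single, classSum_eq_sum_single,
    hJM_eq_sum_single, hJM_eq_sum_single, sum_single_one_mul_sum_single_one,
    sum_single_one_mul_sum_single_one, sum_single_one_mul_sum_single_one,
    coeff_sum_single_one, wcount_add_eq_card]

/-- **Two-legged monotone walks as coefficients in the group algebra** (Step Four).
Let `d ≥ 1`, `α, β ⊢ d`, and `0 ≤ s ≤ r`. The coefficient of the identity permutation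
in `C_α · h_s(J₁,…,J_d) · h_{r−s}(J₁,…,J_d) · C_β ∈ ℂ[S(d)]` equals `W⃗^r(α,β;s)`, the
number of two-legged monotone `r`-step walks from cycle type `α` to cycle type `β` with
reset at time `s`. -/
theorem coeff_one_classSum_hJM (d : ℕ) (hd : 1 ≤ d) (α β : d.Partition)
    (r s : ℕ) (hs : s ≤ r) :
    (classSum d α * hJM d s * hJM d (r - s) * classSum d β).coeff (1 : Equiv.Perm (Fin d))
      = (Wcount d r s α β : ℂ) :=
  coeff_one_classSum_hJM_general d α β r s hs

end
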